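/- arXiv:2105.14098 — 3 statements merged into one kernel-verified Lean document; each statement's English description precedes it below -/
import Mathlib

section
/- Let U ⊆ ℝ^d be open, let φ : U → ℝ be twice continuously differentiable, let A_abs, A_geom : U → ℝ be continuously differentiable, and let k, α : U → ℝ with k(x) ≠ 0 on U. Set A = A_abs · A_geom. Assume that on U: (i) the eikonal equation ‖∇φ‖² = k² holds; (ii) ∇A_abs = −(α/k)·A_abs·∇φ; (iii) the imaginary-part equation 2kαA + 2⟨∇A, ∇φ⟩ + A·Δφ = 0 holds; and (iv) A_abs(x) ≠ 0 on U. Then the transport equation div(A_geom²·∇φ) = 0 holds on U. -/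
open scoped RealInnerProductSpace

/-- The Laplacian of a function on Euclidean space: the sum of its second
partial derivatives along the coordinate directions. -/
noncomputable def laplacian {d : ℕ} {F : Type*} [NormedAddCommGroup F] [NormedSpace ℝ F]
    (f : EuclideanSpace ℝ (Fin d) → F) (x : EuclideanSpace ℝ (Fin d)) : F :=
  ∑ i : Fin d,
    fderiv ℝ (fun y => fderiv ℝ f y (EuclideanSpace.single i (1 : ℝ))) x
      (EuclideanSpace.single i (1 : ℝ))

/-- The divergence of a vector field on Euclidean space: the sum of the partial
derivatives of its components along the coordinate directions. -/
noncomputable def diverg {d : ℕ}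
    (F : EuclideanSpace ℝ (Fin d) → EuclideanSpace ℝ (Fin d))
    (x : EuclideanSpace ℝ (Fin d)) : ℝ :=
  ∑ i : Fin d,
    fderiv ℝ (fun y => F y i) x (EuclideanSpace.single i (1 : ℝ))

/-! Since `div (A_geom² ∇φ) = A_geom (A_geom Δφ + 2⟨∇A_geom, ∇φ⟩)`, it suffices that the bracket
vanishes. Expanding `∇(A_abs A_geom)` in the imaginary-part equation, the eikonal equation turns
`2 A_geom ⟨∇A_abs, ∇φ⟩` into `-2kα A_abs A_geom`, which cancels the absorption term and leaves
`A_abs (A_geom Δφ + 2⟨∇A_geom, ∇φ⟩) = 0`; divide by `A_abs ≠ 0`. -/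

section InnerProductSpace

variable {E : Type*} [NormedAddCommGroup E] [InnerProductSpace ℝ E]

theorem geom_transport_of_imaginary_part {a g k α L : ℝ} {ga gg p : E} (ha : a ≠ 0)
    (heik : ‖p‖ ^ 2 = k ^ 2) (habs : ga = (-(α / k) * a) • p)
    (himag : 2 * k * α * (a * g) + 2 * ⟪a • gg + g • ga, p⟫ + a * g * L = 0) :
    g * L + 2 * ⟪gg, p⟫ = 0 := by
  -- `α / k * k ^ 2 = α * k` also for `k = 0`, where `α / k = 0`.
  have hdiv : α / k * k ^ 2 = α * k := by
    rcases eq_or_ne k 0 with rfl | hk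
    · simp
    · field_simp
  have habs_inner : ⟪ga, p⟫ = -(α * k * a) := by
    rw [habs, real_inner_smul_left, real_inner_self_eq_norm_sq, heik]
    linear_combination (-a) * hdiv
  rw [inner_add_left, real_inner_smul_left, real_inner_smul_left, habs_inner] at himag
  have hfactor : a * (g * L + 2 * ⟪gg, p⟫) = 0 := by linear_combination himag
  exact (mul_eq_zero.mp hfactor).resolve_left ha

variable [CompleteSpace E]

theorem gradient_mul {f g : E → ℝ} {x : E} (hf : DifferentiableAt ℝ f x)
    (hg : DifferentiableAt ℝ g x) :
    gradient (fun y => f y * g y) x = f x • gradient g x + g x • gradient f x := by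
  refine ext_inner_right ℝ fun v => ?_
  simp only [inner_gradient_left, fderiv_fun_mul hf hg, inner_add_left, real_inner_smul_left,
    add_apply, smul_apply, smul_eq_mul]

theorem gradient_sq {f : E → ℝ} {x : E} (hf : DifferentiableAt ℝ f x) :
    gradient (fun y => f y ^ 2) x = (2 * f x) • gradient f x := by
  simp only [sq, gradient_mul hf hf]
  module

theorem ContDiffAt.differentiableAt_gradient {f : E → ℝ} {x : E} {n : WithTop ℕ∞}
    (hf : ContDiffAt ℝ n f x) (hn : 2 ≤ n) : DifferentiableAt ℝ (gradient f) x :=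
  (InnerProductSpace.toDual ℝ E).symm.toContinuousLinearEquiv.differentiableAt.comp x
    ((hf.fderiv_right (m := 1) (by rwa [one_add_one_eq_two])).differentiableAt one_ne_zero)

end InnerProductSpace

section EuclideanSpace

variable {d : ℕ}

theorem gradient_apply_eq_fderiv_single (f : EuclideanSpace ℝ (Fin d) → ℝ)
    (x : EuclideanSpace ℝ (Fin d)) (i : Fin d) :
    gradient f x i = fderiv ℝ f x (EuclideanSpace.single i 1) := by
  rw [← inner_gradient_left, EuclideanSpace.inner_single_right, one_mul, conj_trivial]

theorem diverg_gradient (f : EuclideanSpace ℝ (Fin d) → ℝ) :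
    diverg (gradient f) = laplacian f := by
  funext x
  simp only [diverg, laplacian, gradient_apply_eq_fderiv_single]

theorem diverg_smul {g : EuclideanSpace ℝ (Fin d) → ℝ}
    {F : EuclideanSpace ℝ (Fin d) → EuclideanSpace ℝ (Fin d)} {x : EuclideanSpace ℝ (Fin d)}
    (hg : DifferentiableAt ℝ g x) (hF : DifferentiableAt ℝ F x) :
    diverg (fun y => g y • F y) x = g x * diverg F x + ⟪gradient g x, F x⟫ := by
  have hFi : ∀ i, DifferentiableAt ℝ (fun y => F y i) x := differentiableAt_euclidean.mp hF
  simp only [diverg, PiLp.smul_apply, smul_eq_mul, fun i => fderiv_fun_mul hg (hFi i),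
    add_apply, smul_apply, PiLp.inner_apply, gradient_apply_eq_fderiv_single, RCLike.inner_apply,
    conj_trivial, Finset.mul_sum, ← Finset.sum_add_distrib]

end EuclideanSpace

theorem stmt_2_general (d : ℕ) (U : Set (EuclideanSpace ℝ (Fin d))) (hU : IsOpen U)
    (φ Aabs Ageom k α : EuclideanSpace ℝ (Fin d) → ℝ)
    (hφ : ContDiffOn ℝ 2 φ U)
    (hAabs : ContDiffOn ℝ 1 Aabs U) (hAgeom : ContDiffOn ℝ 1 Ageom U)
    (heik : ∀ x ∈ U, ‖gradient φ x‖ ^ 2 = k x ^ 2)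
    (habs : ∀ x ∈ U, gradient Aabs x = (-(α x / k x) * Aabs x) • gradient φ x)
    (himag : ∀ x ∈ U,
      2 * k x * α x * (Aabs x * Ageom x)
        + 2 * ⟪gradient (fun y => Aabs y * Ageom y) x, gradient φ x⟫
        + (Aabs x * Ageom x) * laplacian φ x = 0)
    (hne : ∀ x ∈ U, Aabs x ≠ 0) :
    ∀ x ∈ U, diverg (fun y => (Ageom y) ^ 2 • gradient φ y) x = 0 := by
  intro x hx
  have hU_nhds : U ∈ nhds x := hU.mem_nhds hx
  have hAabs_x : DifferentiableAt ℝ Aabs x :=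
    (hAabs.contDiffAt hU_nhds).differentiableAt one_ne_zero
  have hAgeom_x : DifferentiableAt ℝ Ageom x :=
    (hAgeom.contDiffAt hU_nhds).differentiableAt one_ne_zero
  have hgradφ_x : DifferentiableAt ℝ (gradient φ) x :=
    (hφ.contDiffAt hU_nhds).differentiableAt_gradient le_rfl
  have htransport := geom_transport_of_imaginary_part (hne x hx) (heik x hx) (habs x hx)
    (gradient_mul hAabs_x hAgeom_x ▸ himag x hx)
  rw [diverg_smul (hAgeom_x.fun_pow 2) hgradφ_x, diverg_gradient, gradient_sq hAgeom_x,
    real_inner_smul_left]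
  linear_combination Ageom x * htransport

/-- If on an open set `U` the eikonal equation `‖∇φ‖² = k²` holds, the absorption
factor satisfies `∇A_abs = −(α/k)·A_abs·∇φ` and is nonvanishing, and the
imaginary-part equation `2kαA + 2⟨∇A, ∇φ⟩ + AΔφ = 0` holds for `A = A_abs·A_geom`,
then the transport equation `div(A_geom²·∇φ) = 0` holds on `U`. -/
theorem stmt_2 (d : ℕ) (U : Set (EuclideanSpace ℝ (Fin d))) (hU : IsOpen U)
    (φ Aabs Ageom k α : EuclideanSpace ℝ (Fin d) → ℝ)
    (hφ : ContDiffOn ℝ 2 φ U)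
    (hAabs : ContDiffOn ℝ 1 Aabs U) (hAgeom : ContDiffOn ℝ 1 Ageom U)
    (hk : ∀ x ∈ U, k x ≠ 0)
    (heik : ∀ x ∈ U, ‖gradient φ x‖ ^ 2 = k x ^ 2)
    (habs : ∀ x ∈ U, gradient Aabs x = (-(α x / k x) * Aabs x) • gradient φ x)
    (himag : ∀ x ∈ U,
      2 * k x * α x * (Aabs x * Ageom x)
        + 2 * ⟪gradient (fun y => Aabs y * Ageom y) x, gradient φ x⟫
        + (Aabs x * Ageom x) * laplacian φ x = 0)
    (hne : ∀ x ∈ U, Aabs x ≠ 0) :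
    ∀ x ∈ U, diverg (fun y => (Ageom y) ^ 2 • gradient φ y) x = 0 :=
  stmt_2_general d U hU φ Aabs Ageom k α hφ hAabs hAgeom heik habs himag hne
end

section
/- Let U ⊆ ℝ^d be open, let φ : U → ℝ be twice continuously differentiable, and let k : U → ℝ be continuously differentiable with k(x) > 0 on U. Suppose the eikonal equation ‖∇φ(x)‖² = k(x)² holds on U. Let I ⊆ ℝ be an interval and x : I → U a differentiable curve solving x′(s) = ∇φ(x(s))/k(x(s)) for all s ∈ I. Then the direction vector κ(s) := ∇φ(x(s)) is differentiable and satisfies the ray equations: x′(s) = κ(s)/k(x(s)), κ′(s) = ∇k(x(s)), and ‖κ(s)‖ = k(x(s)) for all s ∈ I. -/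
/-!
Differentiating the eikonal equation `‖∇φ‖² = k²` in the direction `v` gives
`⟪∇φ, H v⟫ = k ⟪∇k, v⟫` for the Hessian `H = D(∇φ)`, and since `H` is symmetric this says
`H (∇φ) = k ∇k`. Along a curve with `γ' = ∇φ(γ) / k(γ)` the chain rule then gives
`(∇φ ∘ γ)' = H (∇φ(γ)) / k(γ) = ∇k(γ)`; the norm identity is the square root of the eikonal
equation, as `k > 0`.
-/

open InnerProductSpace Filter Topology
open scoped RealInnerProductSpace Gradient

section

variable {E : Type*} [NormedAddCommGroup E] [InnerProductSpace ℝ E] [CompleteSpace E]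
  {φ k : E → ℝ} {x : E}

theorem HasFDerivAt.gradient_of_fderiv {φ'' : E →L[ℝ] E →L[ℝ] ℝ}
    (h : HasFDerivAt (fderiv ℝ φ) φ'' x) :
    HasFDerivAt (∇ φ) ((toDual ℝ E).symm.toContinuousLinearEquiv.toContinuousLinearMap ∘L φ'') x :=
  (toDual ℝ E).symm.toContinuousLinearEquiv.hasFDerivAt.comp x h

theorem ContDiffAt.gradient {n : WithTop ℕ∞} (hφ : ContDiffAt ℝ (n + 1) φ x) :
    ContDiffAt ℝ n (∇ φ) x :=
  (toDual ℝ E).symm.toContinuousLinearEquiv.contDiff.contDiffAt.comp x hφ.fderiv_right_succ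

theorem inner_fderiv_gradient_apply (hφ : DifferentiableAt ℝ (fderiv ℝ φ) x) (v w : E) :
    ⟪fderiv ℝ (∇ φ) x v, w⟫ = fderiv ℝ (fderiv ℝ φ) x v w := by
  rw [hφ.hasFDerivAt.gradient_of_fderiv.fderiv]
  exact toDual_symm_apply

theorem isSelfAdjoint_fderiv_gradient (hφ : ContDiffAt ℝ 2 φ x) :
    IsSelfAdjoint (fderiv ℝ (∇ φ) x) := by
  have hφ' : DifferentiableAt ℝ (fderiv ℝ φ) x :=
    (hφ.fderiv_right_succ (n := 1)).differentiableAt one_ne_zero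
  rw [ContinuousLinearMap.isSelfAdjoint_iff_isSymmetric]
  intro v w
  rw [ContinuousLinearMap.coe_coe, inner_fderiv_gradient_apply hφ', real_inner_comm,
    inner_fderiv_gradient_apply hφ', (hφ.isSymmSndFDerivAt (by simp)).eq]

theorem fderiv_gradient_apply_gradient_of_norm_sq_eq (hφ : ContDiffAt ℝ 2 φ x)
    (hk : DifferentiableAt ℝ k x) (heik : (fun y => ‖∇ φ y‖ ^ 2) =ᶠ[𝓝 x] fun y => k y ^ 2) :
    fderiv ℝ (∇ φ) x (∇ φ x) = k x • ∇ k x := by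
  set H := fderiv ℝ (∇ φ) x
  have hH : HasFDerivAt (∇ φ) H x :=
    ((hφ.gradient (n := 1)).differentiableAt one_ne_zero).hasFDerivAt
  have hderiv := (hH.norm_sq.congr_of_eventuallyEq heik.symm).unique (hk.hasFDerivAt.pow 2)
  refine ext_inner_right ℝ fun v => ?_
  have hdir := congrArg (· v) hderiv
  simp only [smul_apply, ContinuousLinearMap.comp_apply, innerSL_apply_apply, nsmul_eq_mul,
    Nat.cast_ofNat, pow_one, Nat.add_one_sub_one, smul_eq_mul] at hdir
  calc ⟪H (∇ φ x), v⟫ = ⟪∇ φ x, H v⟫ := (isSelfAdjoint_fderiv_gradient hφ).isSymmetric _ _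
    _ = k x * fderiv ℝ k x v := by linarith
    _ = ⟪k x • ∇ k x, v⟫ := by rw [real_inner_smul_left, inner_gradient_left]

end

theorem stmt_4_general (d : ℕ) (U : Set (EuclideanSpace ℝ (Fin d))) (hU : IsOpen U)
    (φ k : EuclideanSpace ℝ (Fin d) → ℝ)
    (hφ : ContDiffOn ℝ 2 φ U) (hk : ContDiffOn ℝ 1 k U)
    (hkpos : ∀ x ∈ U, 0 < k x)
    (heik : ∀ x ∈ U, ‖gradient φ x‖ ^ 2 = k x ^ 2)
    (I : Set ℝ)
    (γ : ℝ → EuclideanSpace ℝ (Fin d)) (hmem : ∀ s ∈ I, γ s ∈ U)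
    (hode : ∀ s ∈ I, HasDerivWithinAt γ ((k (γ s))⁻¹ • gradient φ (γ s)) I s) :
    ∀ s ∈ I,
      HasDerivWithinAt γ ((k (γ s))⁻¹ • gradient φ (γ s)) I s ∧
      HasDerivWithinAt (fun t => gradient φ (γ t)) (gradient k (γ s)) I s ∧
      ‖gradient φ (γ s)‖ = k (γ s) := by
  intro s hs
  have hU_nhds : U ∈ 𝓝 (γ s) := hU.mem_nhds (hmem s hs)
  have hφs : ContDiffAt ℝ 2 φ (γ s) := hφ.contDiffAt hU_nhds
  have hks : 0 < k (γ s) := hkpos _ (hmem s hs)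
  have hHess := fderiv_gradient_apply_gradient_of_norm_sq_eq hφs
    ((hk.contDiffAt hU_nhds).differentiableAt one_ne_zero) (eventually_of_mem hU_nhds heik)
  refine ⟨hode s hs, ?_, (sq_eq_sq₀ (norm_nonneg _) hks.le).1 (heik _ (hmem s hs))⟩
  have hchain := ((hφs.gradient (n := 1)).differentiableAt one_ne_zero).hasFDerivAt
    |>.comp_hasDerivWithinAt s (hode s hs)
  rwa [map_smul, hHess, smul_smul, inv_mul_cancel₀ hks.ne', one_smul] at hchain

/-- Rays, defined as curves everywhere tangent to `∇φ` for a solution `φ` of the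
eikonal equation `‖∇φ‖² = k²` on an open set `U` with `k > 0`, satisfy the ray
equations `x′ = κ/k(x)`, `κ′ = ∇k(x)` with `‖κ‖ = k(x)`, where `κ(s) = ∇φ(x(s))`. -/
theorem stmt_4 (d : ℕ) (U : Set (EuclideanSpace ℝ (Fin d))) (hU : IsOpen U)
    (φ k : EuclideanSpace ℝ (Fin d) → ℝ)
    (hφ : ContDiffOn ℝ 2 φ U) (hk : ContDiffOn ℝ 1 k U)
    (hkpos : ∀ x ∈ U, 0 < k x)
    (heik : ∀ x ∈ U, ‖gradient φ x‖ ^ 2 = k x ^ 2)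
    (I : Set ℝ) (hI : I.OrdConnected)
    (γ : ℝ → EuclideanSpace ℝ (Fin d)) (hmem : ∀ s ∈ I, γ s ∈ U)
    (hode : ∀ s ∈ I, HasDerivWithinAt γ ((k (γ s))⁻¹ • gradient φ (γ s)) I s) :
    ∀ s ∈ I,
      HasDerivWithinAt γ ((k (γ s))⁻¹ • gradient φ (γ s)) I s ∧
      HasDerivWithinAt (fun t => gradient φ (γ t)) (gradient k (γ s)) I s ∧
      ‖gradient φ (γ s)‖ = k (γ s) :=
  stmt_4_general d U hU φ k hφ hk hkpos heik I γ hmem hode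
end

section
/- Let k : ℝ^d → ℝ be continuously differentiable, let I ⊆ ℝ be an interval, and let x, κ : I → ℝ^d be differentiable functions satisfying the ray equations x′(s) = κ(s)/k(x(s)) and κ′(s) = ∇k(x(s)) for all s ∈ I, where k(x(s)) ≠ 0 for all s ∈ I. Then the quantity s ↦ ‖κ(s)‖² − k(x(s))² is constant on I. In particular, if ‖κ(s₀)‖ = k(x(s₀)) at some s₀ ∈ I, then ‖κ(s)‖ = |k(x(s))| for all s ∈ I. -/
open scoped RealInnerProductSpace

/-! Along a ray, `d/ds ‖κ‖² = 2⟪κ, ∇k(x)⟫` and `d/ds k(x)² = 2 k(x) ⟪∇k(x), κ / k(x)⟫ = 2⟪∇k(x), κ⟫`,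
so `‖κ‖² − k(x)²` has zero derivative and is constant on the interval by the mean value
inequality. -/

section

variable {E : Type*} [NormedAddCommGroup E] [InnerProductSpace ℝ E] [CompleteSpace E]

theorem HasGradientAt.comp_hasDerivWithinAt {f : E → ℝ} {f' : E} {g : ℝ → E} {g' : E}
    {s : Set ℝ} {t : ℝ} (hf : HasGradientAt f f' (g t)) (hg : HasDerivWithinAt g g' s t) :
    HasDerivWithinAt (fun u => f (g u)) ⟪f', g'⟫ s t :=
  (hasGradientAt_iff_hasFDerivAt.mp hf).comp_hasDerivWithinAt t hg

theorem hasDerivWithinAt_norm_sq_sub_sq_of_ray {k : E → ℝ} {γ κ : ℝ → E} {I : Set ℝ} {s : ℝ}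
    (hk : DifferentiableAt ℝ k (γ s)) (hkne : k (γ s) ≠ 0)
    (hx : HasDerivWithinAt γ ((k (γ s))⁻¹ • κ s) I s)
    (hκ : HasDerivWithinAt κ (gradient k (γ s)) I s) :
    HasDerivWithinAt (fun t => ‖κ t‖ ^ 2 - k (γ t) ^ 2) 0 I s := by
  have hkγ := hk.hasGradientAt.comp_hasDerivWithinAt hx
  refine (hκ.norm_sq.sub (hkγ.pow 2)).congr_deriv ?_
  rw [real_inner_smul_right, real_inner_comm]
  field_simp
  ring

end

theorem Set.OrdConnected.eq_of_hasDerivWithinAt_eq_zero {F : Type*} [NormedAddCommGroup F]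
    [NormedSpace ℝ F] {f : ℝ → F} {s : Set ℝ} (hs : s.OrdConnected)
    (hf : ∀ x ∈ s, HasDerivWithinAt f 0 s x) {x y : ℝ} (hx : x ∈ s) (hy : y ∈ s) :
    f x = f y := by
  have h := hs.convex.norm_image_sub_le_of_norm_hasDerivWithin_le (C := 0) hf
    (fun _ _ => norm_zero.le) hy hx
  rwa [zero_mul, norm_le_zero_iff, sub_eq_zero] at h

/-- For solutions `(x, κ)` of the ray equations `x′ = κ/k(x)`, `κ′ = ∇k(x)` with
`k(x(s)) ≠ 0`, the quantity `‖κ‖² − k(x)²` is a first integral (constant along the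
ray); in particular, if `‖κ‖ = k(x)` holds at some point of the interval, then
`‖κ‖ = |k(x)|` holds everywhere on it. -/
theorem stmt_6 (d : ℕ) (k : EuclideanSpace ℝ (Fin d) → ℝ) (hk : ContDiff ℝ 1 k)
    (I : Set ℝ) (hI : I.OrdConnected)
    (γ κ : ℝ → EuclideanSpace ℝ (Fin d))
    (hkne : ∀ s ∈ I, k (γ s) ≠ 0)
    (hx : ∀ s ∈ I, HasDerivWithinAt γ ((k (γ s))⁻¹ • κ s) I s)
    (hκ : ∀ s ∈ I, HasDerivWithinAt κ (gradient k (γ s)) I s) :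
    (∃ C : ℝ, ∀ s ∈ I, ‖κ s‖ ^ 2 - k (γ s) ^ 2 = C) ∧
    (∀ s₀ ∈ I, ‖κ s₀‖ = k (γ s₀) → ∀ s ∈ I, ‖κ s‖ = |k (γ s)|) := by
  have hconst : ∀ s ∈ I, ∀ t ∈ I, ‖κ s‖ ^ 2 - k (γ s) ^ 2 = ‖κ t‖ ^ 2 - k (γ t) ^ 2 :=
    fun s hs t ht => hI.eq_of_hasDerivWithinAt_eq_zero
      (fun u hu => hasDerivWithinAt_norm_sq_sub_sq_of_ray
        (hk.differentiable one_ne_zero _) (hkne u hu) (hx u hu) (hκ u hu)) hs ht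
  refine ⟨?_, fun s₀ hs₀ h₀ s hs => ?_⟩
  · rcases I.eq_empty_or_nonempty with rfl | ⟨s₀, hs₀⟩
    · exact ⟨0, fun s hs => hs.elim⟩
    · exact ⟨_, fun s hs => hconst s hs s₀ hs₀⟩
  · have hsq₀ : ‖κ s₀‖ ^ 2 = k (γ s₀) ^ 2 := by rw [h₀]
    have hsq : ‖κ s‖ ^ 2 = k (γ s) ^ 2 := by linarith [hconst s hs s₀ hs₀]
    rw [← abs_norm]
    exact (sq_eq_sq_iff_abs_eq_abs _ _).mp hsq
end
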